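/- If A is an abelian group and c ∈ A has order 2, then the map ρ(x,a) = (x, a+c) is a good involution on the Galkin quandle G(A, c): ρ is an involution satisfying z * ρ(w) = z ∗̄ w and ρ(z*w) = ρ(z)*w for all z, w ∈ Z₃ × A. Hence G(A, c) is a symmetric quandle which is not a kei. -/
import Mathlib


/-- The function `μ` with `μ(0) = 2`, `μ(1) = μ(2) = -1`. -/
def galkinMu : ZMod 3 → ℤ := fun x => if x = 0 then 2 else -1

/-- The function `τ` with `τ(0) = 0`, `τ(1) = c₁`, `τ(2) = c₂`. -/
def galkinTau {A : Type*} [AddCommGroup A] (c₁ c₂ : A) : ZMod 3 → A :=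
  fun x => if x = 1 then c₁ else if x = 2 then c₂ else 0

/-- The Galkin quandle operation on `ZMod 3 × A` for the quandle `G(A, c₁, c₂)`. -/
def galkinOp {A : Type*} [AddCommGroup A] (c₁ c₂ : A) (p q : ZMod 3 × A) : ZMod 3 × A :=
  (2 * q.1 - p.1, -p.2 + galkinMu (p.1 - q.1) • q.2 + galkinTau c₁ c₂ (p.1 - q.1))

theorem stmt_17 {A : Type*} [AddCommGroup A] (c : A) (hc : addOrderOf c = 2) :
    (∀ z : ZMod 3 × A,
      (fun w : ZMod 3 × A => ((w.1, w.2 + c) : ZMod 3 × A))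
        ((fun w : ZMod 3 × A => ((w.1, w.2 + c) : ZMod 3 × A)) z) = z) ∧
    (∀ z w : ZMod 3 × A,
      galkinOp 0 c (galkinOp 0 c z (w.1, w.2 + c)) w = z) ∧
    (∀ z w : ZMod 3 × A,
      (((galkinOp 0 c z w).1, (galkinOp 0 c z w).2 + c) : ZMod 3 × A) =
        galkinOp 0 c (z.1, z.2 + c) w) ∧
    (∃ z w : ZMod 3 × A, galkinOp 0 c (galkinOp 0 c z w) w ≠ z) := by
  have hcc : c + c = 0 := by
    have h := addOrderOf_nsmul_eq_zero c
    rw [hc, two_nsmul] at h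
    exact h
  have hc0 : c ≠ 0 := by
    intro h
    rw [h, addOrderOf_zero] at hc
    exact absurd hc (by norm_num)
  have hsm : (2 : ℤ) • c = 0 := by rw [two_zsmul]; exact hcc
  have hd : ∀ d : ZMod 3, d = 0 ∨ d = 1 ∨ d = 2 := by decide
  refine ⟨?_, ?_, ?_, ?_⟩
  · rintro ⟨z1, z2⟩
    simp [add_assoc, hcc]
  · rintro ⟨z1, z2⟩ ⟨w1, w2⟩
    have h1 : 2 * w1 - (2 * w1 - z1) = z1 := by ring
    simp only [galkinOp, Prod.mk.injEq]
    refine ⟨h1, ?_⟩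
    have hr : 2 * w1 - z1 - w1 = -(z1 - w1) := by ring
    have e1 : ((2:ZMod 3) = 0) = False := by decide
    have e2 : ((2:ZMod 3) = 1) = False := by decide
    have e3 : ((1:ZMod 3) = 0) = False := by decide
    have e4 : ((1:ZMod 3) = 1) = True := by decide
    have e5 : ((1:ZMod 3) = 2) = False := by decide
    rcases hd (z1 - w1) with h | h | h
    · have h2 : 2 * w1 - z1 - w1 = 0 := by rw [hr, h]; decide
      simp [h, h2, galkinMu, galkinTau, e1, e2, e3, e4, e5]
      abel_nf
      simp [hsm]
    · have h2 : 2 * w1 - z1 - w1 = 2 := by rw [hr, h]; decide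
      simp [h, h2, galkinMu, galkinTau, e1, e2, e3, e4, e5]
      abel_nf
      simp [hsm]
    · have h2 : 2 * w1 - z1 - w1 = 1 := by rw [hr, h]; decide
      simp [h, h2, galkinMu, galkinTau, e1, e2, e3, e4, e5]
      abel_nf
  · rintro ⟨z1, z2⟩ ⟨w1, w2⟩
    simp only [galkinOp, Prod.mk.injEq]
    refine ⟨trivial, ?_⟩
    have hneg : ∀ a : A, a + c = a - c := by
      intro a
      rw [sub_eq_add_neg, neg_eq_of_add_eq_zero_right hcc]
    rw [hneg]
    abel
  · refine ⟨(0, 0), (1, 0), ?_⟩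
    simp [galkinOp, galkinMu, galkinTau]
    refine ⟨by decide, by decide, hc0⟩
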